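/- There exists an absolute constant C > 0 such that for every n ∈ ℕ the Fibonacci point set 𝓕_n satisfies disp(𝓕_n) ≤ C/b_n. -/

import Mathlib

/-- The dispersion of a set T ⊆ [0,1)^d: the supremum of volumes of axis-parallel boxes
prod_j [x_j, y_j) ⊆ [0,1)^d containing no point of T. -/
noncomputable def disp (d : ℕ) (T : Set (Fin d → ℝ)) : ℝ :=
  sSup {V : ℝ | ∃ x y : Fin d → ℝ,
    (∀ j, 0 ≤ x j ∧ x j ≤ y j ∧ y j ≤ 1) ∧
    (∀ t ∈ T, ∃ j, t j < x j ∨ y j ≤ t j) ∧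
    V = ∏ j, (y j - x j)}

/-- The Fibonacci numbers with b_0 = b_1 = 1, b_n = b_{n-1} + b_{n-2}. -/
def fibb (n : ℕ) : ℕ := Nat.fib (n + 1)

/-- The Fibonacci point set F_n = {(mu/b_n, {mu b_{n-1}/b_n}) : mu = 1,...,b_n} ⊆ [0,1)^2. -/
noncomputable def FibSet (n : ℕ) : Set (Fin 2 → ℝ) :=
  {p | ∃ μ : ℕ, 1 ≤ μ ∧ μ ≤ fibb n ∧
    p = ![(μ : ℝ) / (fibb n : ℝ),
          Int.fract ((μ : ℝ) * (fibb (n - 1) : ℝ) / (fibb n : ℝ))]}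

/-!
Write N = b_n = F_{n+1} and a = b_{n-1} = F_n. Scaled by N, the Fibonacci point set is the part
of the lattice {(k, l) ∈ ℤ² : l ≡ k a (mod N)} lying in (0, N] × [0, N). By d'Ocagne's identity
F_{m+1} F_n - F_m F_{n+1} = (-1)^m F_{n-m}, the vectors (F_{m+1}, ±F_{n-m}) and
(F_{m+2}, ∓F_{n-m-1}) lie in this lattice; one points up and one down, so their half-open
fundamental parallelogram fits into an F_{m+3} × F_{n+1-m} box, and every translate of such a box
contains a lattice point. Given an empty box of width W, choose m with
F_{m+3} + 1 ≤ W < F_{m+4} + 1: its height is then below F_{n+1-m}, and its area below 2 F_{m+4} F_{n+1-m} ≤ 2 F_{n+4} ≤ 10 N.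
-/

open Nat

namespace Nat

theorem fib_succ_mul_fib_add (m k : ℕ) :
    (fib (m + 1) * fib (k + m) : ℤ) = fib m * fib (k + m + 1) + (-1) ^ m * fib k := by
  induction m with
  | zero => simp
  | succ m ih =>
    rw [show k + (m + 1) + 1 = k + m + 2 by ring, show k + (m + 1) = k + m + 1 by ring,
      fib_add_two, fib_add_two]
    push_cast
    linear_combination -ih

theorem neg_one_pow_mul_fib_modEq (m k : ℕ) :
    (-1) ^ m * (fib k : ℤ) ≡ fib (m + 1) * fib (k + m) [ZMOD fib (k + m + 1)] :=
  Int.modEq_iff_dvd.mpr ⟨fib m, by rw [fib_succ_mul_fib_add]; ring⟩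

theorem fib_add_four_mul_fib_add_two_le (m r : ℕ) :
    fib (m + 4) * fib (r + 2) ≤ 5 * fib (r + m + 2) := by
  have h := fib_add (m + 3) (r + 1)
  rw [show m + 3 + (r + 1) + 1 = r + m + 2 + 3 by ring] at h
  have h₁ := fib_add_two (n := r + m + 3)
  have h₂ := fib_add_two (n := r + m + 2)
  have h₃ := fib_add_two (n := r + m + 1)
  have h₄ := fib_le_fib_succ (n := r + m + 1)
  nlinarith [Nat.zero_le (fib (m + 3) * fib (r + 1))]

end Nat

theorem exists_int_combination_mem_box {p q p' q' : ℝ} (hp : 0 < p) (hq : 0 < q)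
    (hp' : 0 < p') (hq' : 0 < q') (c₀ c₁ : ℝ) :
    ∃ s t : ℤ, c₀ ≤ s * p + t * p' ∧ s * p + t * p' < c₀ + (p + p') ∧
      c₁ ≤ s * q - t * q' ∧ s * q - t * q' < c₁ + (q + q') := by
  have hD : p * q' + p' * q ≠ 0 := by positivity
  -- Coordinates of (c₀, c₁ + q') in the basis (p, q), (p', -q'); rounding them up adds a point of
  -- the half-open fundamental parallelogram, which lies in [0, p + p') × (-q', q).
  obtain ⟨α, β, hx, hy⟩ : ∃ α β : ℝ, α * p + β * p' = c₀ ∧ α * q - β * q' = c₁ + q' :=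
    ⟨(c₀ * q' + p' * (c₁ + q')) / (p * q' + p' * q), (c₀ * q - p * (c₁ + q')) / (p * q' + p' * q),
      by field_simp; ring, by field_simp; ring⟩
  refine ⟨⌈α⌉, ⌈β⌉, ?_, ?_, ?_, ?_⟩ <;>
    nlinarith [Int.le_ceil α, Int.le_ceil β, Int.ceil_lt_add_one α, Int.ceil_lt_add_one β]

theorem exists_modEq_mem_box {N a p q p' q' : ℤ} (hp : 0 < p) (hq : 0 < q)
    (hp' : 0 < p') (hq' : 0 < q') (hu : q ≡ p * a [ZMOD N]) (hw : -q' ≡ p' * a [ZMOD N])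
    (c₀ c₁ : ℝ) :
    ∃ k l : ℤ, l ≡ k * a [ZMOD N] ∧ c₀ ≤ k ∧ k < c₀ + (p + p') ∧ c₁ ≤ l ∧ l < c₁ + (q + q') := by
  obtain ⟨s, t, h⟩ := exists_int_combination_mem_box (p := p) (q := q) (p' := p') (q' := q')
    (by exact_mod_cast hp) (by exact_mod_cast hq) (by exact_mod_cast hp') (by exact_mod_cast hq')
    c₀ c₁
  refine ⟨s * p + t * p', s * q - t * q', ?_, by push_cast; exact h⟩
  calc s * q - t * q' = s * q + t * -q' := by ring
    _ ≡ s * (p * a) + t * (p' * a) [ZMOD N] := (hu.mul_left s).add (hw.mul_left t)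
    _ = (s * p + t * p') * a := by ring

theorem exists_fib_modEq_mem_box (m r : ℕ) (hr : r ≠ 0) (c₀ c₁ : ℝ) :
    ∃ k l : ℤ, l ≡ k * fib (r + m + 1) [ZMOD fib (r + m + 2)] ∧
      c₀ ≤ k ∧ k < c₀ + fib (m + 3) ∧ c₁ ≤ l ∧ l < c₁ + fib (r + 2) := by
  have hu := neg_one_pow_mul_fib_modEq m (r + 1)
  have hw := neg_one_pow_mul_fib_modEq (m + 1) r
  rw [show r + 1 + m = r + m + 1 by ring, show r + m + 1 + 1 = r + m + 2 by ring] at hu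
  rw [show r + (m + 1) = r + m + 1 by ring, show r + m + 1 + 1 = r + m + 2 by ring,
    show m + 1 + 1 = m + 2 from rfl] at hw
  have hm : (fib (m + 3) : ℝ) = fib (m + 1) + fib (m + 2) := by exact_mod_cast fib_add_two
  have hr' : (fib (r + 2) : ℝ) = fib (r + 1) + fib r := by push_cast [fib_add_two]; ring
  have hfib : ∀ i, i ≠ 0 → (0 : ℤ) < fib i := fun i hi => by exact_mod_cast fib_pos.mpr (by omega)
  rcases even_or_odd m with hm2 | hm2
  · rw [hm2.neg_one_pow, one_mul] at hu
    rw [hm2.add_one.neg_one_pow, neg_one_mul] at hw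
    simpa only [hm, hr', Int.cast_add, Int.cast_natCast] using
      exists_modEq_mem_box (hfib (m + 1) (by omega)) (hfib (r + 1) (by omega))
        (hfib (m + 2) (by omega)) (hfib r hr) hu hw c₀ c₁
  · rw [hm2.neg_one_pow, neg_one_mul] at hu
    rw [hm2.add_one.neg_one_pow, one_mul] at hw
    rw [add_comm (fib (m + 1) : ℝ)] at hm
    rw [add_comm (fib (r + 1) : ℝ)] at hr'
    simpa only [hm, hr', Int.cast_add, Int.cast_natCast] using
      exists_modEq_mem_box (hfib (m + 2) (by omega)) (hfib r hr)
        (hfib (m + 1) (by omega)) (hfib (r + 1) (by omega)) hw hu c₀ c₁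

theorem mem_fibSet_of_modEq {n : ℕ} {k l : ℤ} (hk : 1 ≤ k) (hkN : k ≤ fibb n) (hl : 0 ≤ l)
    (hlN : l < fibb n) (hkl : l ≡ k * fibb (n - 1) [ZMOD fibb n]) :
    ![(k : ℝ) / fibb n, (l : ℝ) / fibb n] ∈ FibSet n := by
  lift k to ℕ using by omega
  have hN : (0 : ℝ) < fibb n := by exact_mod_cast hl.trans_lt hlN
  obtain ⟨z, hz⟩ := Int.modEq_iff_dvd.mp hkl
  refine ⟨k, by exact_mod_cast hk, by exact_mod_cast hkN, ?_⟩
  have : Int.fract ((k : ℝ) * fibb (n - 1) / fibb n) = l / fibb n := by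
    rw [Int.fract_eq_iff]
    refine ⟨by positivity, (div_lt_one hN).mpr (by exact_mod_cast hlN), z, ?_⟩
    rw [← sub_div, div_eq_iff hN.ne']
    exact_mod_cast (by linear_combination hz : (k : ℤ) * fibb (n - 1) - l = z * fibb n)
  rw [this, Int.cast_natCast]

theorem exists_mem_fibSet_mem_box (m r : ℕ) (hr : r ≠ 0) {x y : Fin 2 → ℝ}
    (hx : ∀ i, 0 ≤ x i) (hy : ∀ i, y i ≤ 1)
    (hw : fib (m + 3) + 1 ≤ fib (r + m + 2) * (y 0 - x 0))
    (hh : fib (r + 2) ≤ fib (r + m + 2) * (y 1 - x 1)) :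
    ∃ t ∈ FibSet (r + m + 1), ∀ i, x i ≤ t i ∧ t i < y i := by
  have hN : (0 : ℝ) < fib (r + m + 2) := by exact_mod_cast fib_pos.mpr (by omega)
  -- The shift by 1 keeps k ≥ 1: `FibSet` takes μ ∈ [1, b_n], so the lattice point (0, 0)
  -- appears only as (1, 0), outside every box.
  obtain ⟨k, l, hkl, hk₀, hk₁, hl₀, hl₁⟩ :=
    exists_fib_modEq_mem_box m r hr (fib (r + m + 2) * x 0 + 1) (fib (r + m + 2) * x 1)
  have hx₀ := mul_nonneg hN.le (hx 0)
  have hx₁ := mul_nonneg hN.le (hx 1)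
  have hy₀ := mul_le_of_le_one_right hN.le (hy 0)
  have hy₁ := mul_le_of_le_one_right hN.le (hy 1)
  have hk : (1 : ℝ) ≤ k := by linarith
  have hkN : (k : ℝ) ≤ fib (r + m + 2) := by linarith
  have hl : (0 : ℝ) ≤ l := by linarith
  have hlN : (l : ℝ) < fib (r + m + 2) := by linarith
  have hmem := mem_fibSet_of_modEq (n := r + m + 1) (by exact_mod_cast hk) (by exact_mod_cast hkN)
    (by exact_mod_cast hl) (by exact_mod_cast hlN) (by simpa [fibb] using hkl)
  refine ⟨_, hmem, Fin.forall_fin_two.mpr ⟨?_, ?_⟩⟩ <;>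
    simp only [Matrix.cons_val_zero, Matrix.cons_val_one, fibb, le_div_iff₀ hN, div_lt_iff₀ hN] <;>
    constructor <;> linarith

theorem exists_fib_le_lt {w : ℝ} {n : ℕ} (hw : 2 ≤ w) (hwn : w < fib (n + 1)) :
    ∃ m, m + 3 ≤ n ∧ (fib (m + 3) : ℝ) ≤ w ∧ w < fib (m + 4) := by
  classical
  have hex : ∃ k, w < fib k := ⟨n + 1, hwn⟩
  have hk := Nat.find_spec hex
  have hkn : Nat.find hex ≤ n + 1 := Nat.find_min' hex hwn
  obtain ⟨m, hm⟩ : ∃ m, Nat.find hex = m + 4 := by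
    refine ⟨Nat.find hex - 4, ?_⟩
    by_contra! h
    have : fib (Nat.find hex) ≤ 2 := (fib_mono (by omega : Nat.find hex ≤ 3)).trans (by decide)
    have : (fib (Nat.find hex) : ℝ) ≤ 2 := by exact_mod_cast this
    linarith
  rw [hm] at hk hkn
  exact ⟨m, by omega, not_lt.mp (Nat.find_min hex (by omega : m + 3 < Nat.find hex)), hk⟩

theorem scaled_area_le_of_disjoint_fibSet (n : ℕ) {x y : Fin 2 → ℝ}
    (hxy : ∀ j, 0 ≤ x j ∧ x j ≤ y j ∧ y j ≤ 1)
    (hT : ∀ t ∈ FibSet n, ∃ j, t j < x j ∨ y j ≤ t j) :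
    (fib (n + 1) * (y 0 - x 0)) * (fib (n + 1) * (y 1 - x 1)) ≤ 10 * fib (n + 1) := by
  have hN : (0 : ℝ) < fib (n + 1) := by exact_mod_cast fib_pos.mpr n.succ_pos
  have hW₀ : 0 ≤ fib (n + 1) * (y 0 - x 0) := mul_nonneg hN.le (by linarith [hxy 0])
  have hH₀ : 0 ≤ fib (n + 1) * (y 1 - x 1) := mul_nonneg hN.le (by linarith [hxy 1])
  have hWN : fib (n + 1) * (y 0 - x 0) ≤ fib (n + 1) :=
    mul_le_of_le_one_right hN.le (by linarith [hxy 0])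
  have hHN : fib (n + 1) * (y 1 - x 1) ≤ fib (n + 1) :=
    mul_le_of_le_one_right hN.le (by linarith [hxy 1])
  rcases lt_or_ge (fib (n + 1) * (y 0 - x 0)) 3 with hW | hW
  · nlinarith
  obtain ⟨m, hmn, hm₃, hm₄⟩ := exists_fib_le_lt (w := fib (n + 1) * (y 0 - x 0) - 1) (n := n)
    (by linarith) (by linarith)
  obtain ⟨r, rfl⟩ : ∃ r, n = r + m + 1 := ⟨n - m - 1, by omega⟩
  rw [show r + m + 1 + 1 = r + m + 2 from rfl] at *
  have hH : fib (r + m + 2) * (y 1 - x 1) < fib (r + 2) := by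
    by_contra! hH
    obtain ⟨t, ht, hbox⟩ :=
      exists_mem_fibSet_mem_box m r (by omega) (fun i => (hxy i).1) (fun i => (hxy i).2.2)
        (by linarith) hH
    obtain ⟨i, hi⟩ := hT t ht
    rcases hi with hi | hi <;> linarith [hbox i]
  have hfib : (1 : ℝ) ≤ fib (m + 4) := by exact_mod_cast fib_pos.mpr (by omega)
  have hprod : (fib (m + 4) * fib (r + 2) : ℝ) ≤ 5 * fib (r + m + 2) := by
    exact_mod_cast fib_add_four_mul_fib_add_two_le m r
  calc (fib (r + m + 2) * (y 0 - x 0)) * (fib (r + m + 2) * (y 1 - x 1))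
      ≤ (2 * fib (m + 4)) * fib (r + 2) := mul_le_mul (by linarith) hH.le hH₀ (by positivity)
    _ ≤ 10 * fib (r + m + 2) := by linarith

theorem statement12 :
    ∃ C : ℝ, 0 < C ∧ ∀ n : ℕ, disp 2 (FibSet n) ≤ C / (fibb n : ℝ) := by
  refine ⟨10, by norm_num, fun n => Real.sSup_le ?_ (by positivity)⟩
  rintro _ ⟨x, y, hxy, hT, rfl⟩
  have hN : (0 : ℝ) < fibb n := by exact_mod_cast fib_pos.mpr n.succ_pos
  have h := scaled_area_le_of_disjoint_fibSet n hxy hT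
  rw [Fin.prod_univ_two, le_div_iff₀ hN]
  unfold fibb at hN ⊢
  refine le_of_mul_le_mul_left ?_ hN
  linear_combination h
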